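/- arXiv:0709.0334 — 4 statements merged into one kernel-verified Lean document; each statement's English description precedes it below -/
import Mathlib

section
/- For every β ∈ [1,2] and L > 0 there exists a constant K = K(β, L) ∈ (0, 1] with the following property: whenever g and ĝ are concave real-valued functions on a compact interval [A, B] with g ∈ H^{β,L}([A,B]), and ε > 0, 0 < δ ≤ K·min(B − A, ε^{1/β}) are such that sup_{t ∈ [A,B]} (ĝ − g)(t) ≥ ε or sup_{t ∈ [A+δ, B−δ]} (g − ĝ)(t) ≥ ε, then there exists c ∈ [A, B − δ] such that inf_{t ∈ [c, c+δ]} (ĝ − g)(t) ≥ ε/4 or inf_{t ∈ [c, c+δ]} (g − ĝ)(t) ≥ ε/4. -/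
/-- The Hölder class `H^{β,L}(I)`: for `β = 1`, `g` is `L`-Lipschitz on `I`; for `β > 1`,
`g` is differentiable on `I` with `|g'(x) − g'(y)| ≤ L|x − y|^{β−1}` on `I`. -/
def HolderClass (β L : ℝ) (I : Set ℝ) (g : ℝ → ℝ) : Prop :=
  (β = 1 → ∀ x ∈ I, ∀ y ∈ I, |g x - g y| ≤ L * |x - y|) ∧
  (1 < β → ∃ g' : ℝ → ℝ, (∀ x ∈ I, HasDerivWithinAt g (g' x) I x) ∧
    ∀ x ∈ I, ∀ y ∈ I, |g' x - g' y| ≤ L * |x - y| ^ (β - 1))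

lemma chord_of_concave {S : Set ℝ} {f : ℝ → ℝ} (hf : ConcaveOn ℝ S f) {a c b : ℝ}
    (ha : a ∈ S) (hb : b ∈ S) (hac : a < c) (hcb : c < b) :
    (b - c) * f a + (c - a) * f b ≤ (b - a) * f c := by
  have hab : a < b := hac.trans hcb
  have hba : (0:ℝ) < b - a := by linarith
  have h := hf.2 ha hb (div_nonneg (by linarith : (0:ℝ) ≤ b - c) hba.le)
    (div_nonneg (by linarith : (0:ℝ) ≤ c - a) hba.le)
    (show (b - c)/(b - a) + (c - a)/(b - a) = 1 by field_simp; ring)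
  have hx : ((b - c)/(b - a)) • a + ((c - a)/(b - a)) • b = c := by
    rw [smul_eq_mul, smul_eq_mul, div_mul_eq_mul_div, div_mul_eq_mul_div, ← add_div,
      div_eq_iff hba.ne']
    ring
  rw [hx] at h
  simp only [smul_eq_mul] at h
  have h2 := mul_le_mul_of_nonneg_left h hba.le
  have hne : b - a ≠ 0 := hba.ne'
  field_simp at h2
  nlinarith [h2]

lemma holder_tangent {β L A B : ℝ} (hβ : β ∈ Set.Icc (1:ℝ) 2) (hL : 0 < L)
    {g : ℝ → ℝ} (hg : HolderClass β L (Set.Icc A B) g) {x₀ : ℝ} (hx₀ : x₀ ∈ Set.Icc A B) :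
    ∃ m : ℝ, ∀ t ∈ Set.Icc A B, |g t - g x₀ - m * (t - x₀)| ≤ L * |t - x₀| ^ β := by
  rcases eq_or_lt_of_le hβ.1 with hβ1 | hβ1
  · refine ⟨0, fun t ht => ?_⟩
    have := hg.1 hβ1.symm t ht x₀ hx₀
    rw [← hβ1, Real.rpow_one]
    simpa using this
  · obtain ⟨g', hd, hh⟩ := hg.2 hβ1
    refine ⟨g' x₀, fun t ht => ?_⟩
    rcases eq_or_ne t x₀ with rfl | hne
    · simp [Real.zero_rpow (by linarith : β ≠ 0)]
    · set s : Set ℝ := Set.uIcc x₀ t with hs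
      have hsub : s ⊆ Set.Icc A B := Set.uIcc_subset_Icc hx₀ ht
      have hconv : Convex ℝ s := convex_uIcc _ _
      have hderiv : ∀ u ∈ s, HasDerivWithinAt (fun y => g y - g' x₀ * y) (g' u - g' x₀) s u := by
        intro u hu
        have h := ((hd u (hsub hu)).mono hsub).sub
          ((hasDerivWithinAt_id u s).const_mul (g' x₀))
        rw [mul_one] at h
        exact h
      have hbound : ∀ u ∈ s, ‖g' u - g' x₀‖ ≤ L * |t - x₀| ^ (β - 1) := by
        intro u hu
        have h1 : |g' u - g' x₀| ≤ L * |u - x₀| ^ (β - 1) := hh u (hsub hu) x₀ hx₀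
        have h2 : |u - x₀| ≤ |t - x₀| := by
          rcases le_total x₀ t with h | h
          · simp only [hs, Set.uIcc_of_le h, Set.mem_Icc] at hu
            rw [abs_of_nonneg (by linarith [hu.1]), abs_of_nonneg (by linarith)]
            linarith [hu.2]
          · simp only [hs, Set.uIcc_of_ge h, Set.mem_Icc] at hu
            rw [abs_of_nonpos (by linarith [hu.2]), abs_of_nonpos (by linarith)]
            linarith [hu.1]
        rw [Real.norm_eq_abs]
        refine h1.trans ?_
        have := Real.rpow_le_rpow (abs_nonneg _) h2 (by linarith : (0:ℝ) ≤ β - 1)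
        nlinarith
      have key := hconv.norm_image_sub_le_of_norm_hasDerivWithin_le hderiv hbound
        Set.left_mem_uIcc Set.right_mem_uIcc
      simp only [Real.norm_eq_abs] at key
      have habs : |t - x₀| ≠ 0 := by
        simp [sub_eq_zero, hne]
      have hrw : L * |t - x₀| ^ (β - 1) * |t - x₀| = L * |t - x₀| ^ β := by
        rw [mul_assoc, ← Real.rpow_add_one habs]
        ring_nf
      have heq : g t - g' x₀ * t - (g x₀ - g' x₀ * x₀) = g t - g x₀ - g' x₀ * (t - x₀) := by ring
      rw [heq, hrw] at key
      exact key

lemma aux_case1 (ε δ A B x₀ : ℝ) (D F : ℝ → ℝ)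
    (hε : 0 < ε) (hδ : 0 < δ)
    (hAx : A ≤ x₀) (hxB : x₀ + 7/2*δ ≤ B)
    (hchord : ∀ a c b : ℝ, A ≤ a → a < c → c < b → b ≤ B →
      (b - c) * F a + (c - a) * F b ≤ (b - a) * F c)
    (hF0 : 7*ε/8 < F x₀)
    (happ : ∀ t, x₀ ≤ t → t ≤ x₀ + 7/2*δ → |D t - F t| ≤ ε/16) :
    ∃ c, A ≤ c ∧ c + δ ≤ B ∧
      ((∀ t ∈ Set.Icc c (c+δ), ε/4 ≤ D t) ∨ (∀ t ∈ Set.Icc c (c+δ), ε/4 ≤ -D t)) := by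
  by_cases hall : ∀ t ∈ Set.Icc x₀ (x₀+δ), 5*ε/16 ≤ F t
  · refine ⟨x₀, hAx, by linarith, Or.inl fun t ht => ?_⟩
    have h1 := hall t ht
    have h2 := abs_le.1 (happ t ht.1 (by linarith [ht.2]))
    linarith [h2.1]
  · push_neg at hall
    obtain ⟨t₁, ht₁, hFt₁⟩ := hall
    have ht₁x : x₀ < t₁ := lt_of_le_of_ne ht₁.1 (by rintro rfl; linarith)
    refine ⟨x₀ + 5/2*δ, by linarith, by linarith, Or.inr fun t ht => ?_⟩
    simp only [Set.mem_Icc] at ht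
    have ht1t : t₁ < t := by linarith [ht₁.2, ht.1]
    have hc := hchord x₀ t₁ t hAx ht₁x ht1t (by linarith [ht.2])
    have hu : (0:ℝ) < t₁ - x₀ := by linarith
    have hFt : F t ≤ -(17*ε/32) := by
      nlinarith [mul_nonneg (by linarith : (0:ℝ) ≤ t - x₀) (by linarith : (0:ℝ) ≤ 5*ε/16 - F t₁),
        mul_nonneg (by linarith : (0:ℝ) ≤ t - t₁) (by linarith : (0:ℝ) ≤ F x₀ - 7*ε/8),
        mul_le_mul_of_nonneg_left (by linarith [ht.1] : 5*δ/2 ≤ t - x₀) hε.le,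
        mul_le_mul_of_nonneg_left (by linarith [ht₁.2] : t₁ - x₀ ≤ δ) hε.le,
        mul_pos hu hε]
    have h2 := abs_le.1 (happ t (by linarith [ht.1]) (by linarith [ht.2]))
    linarith [h2.2]

lemma aux_case2 (ε δ A B x₀ : ℝ) (D F : ℝ → ℝ)
    (hε : 0 < ε) (hδ : 0 < δ)
    (hAx : A + δ ≤ x₀) (hxB : x₀ ≤ B - δ)
    (hchord : ∀ a c b : ℝ, A ≤ a → a < c → c < b → b ≤ B →
      (b - c) * F a + (c - a) * F b ≤ (b - a) * F c)
    (hF0 : F x₀ < -(7*ε/8))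
    (happ : ∀ t, x₀ - δ ≤ t → t ≤ x₀ + δ → |D t - F t| ≤ ε/16) :
    ∃ c, A ≤ c ∧ c + δ ≤ B ∧
      ((∀ t ∈ Set.Icc c (c+δ), ε/4 ≤ D t) ∨ (∀ t ∈ Set.Icc c (c+δ), ε/4 ≤ -D t)) := by
  by_cases hall : ∀ t ∈ Set.Icc x₀ (x₀+δ), F t ≤ -(5*ε/16)
  · refine ⟨x₀, by linarith, by linarith, Or.inr fun t ht => ?_⟩
    have h1 := hall t ht
    have h2 := abs_le.1 (happ t (by linarith [ht.1]) ht.2)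
    linarith [h2.2]
  · push_neg at hall
    obtain ⟨t₂, ht₂, hFt₂⟩ := hall
    have ht₂x : x₀ < t₂ := lt_of_le_of_ne ht₂.1 (by rintro rfl; linarith)
    refine ⟨x₀ - δ, by linarith, by linarith, Or.inr fun t ht => ?_⟩
    simp only [Set.mem_Icc, sub_add_cancel] at ht
    have hFt : F t ≤ -(5*ε/16) := by
      rcases eq_or_lt_of_le ht.2 with rfl | htx
      · linarith
      · have hc := hchord t x₀ t₂ (by linarith [ht.1]) htx ht₂x (by linarith [ht₂.2])
        nlinarith [mul_nonneg (by linarith : (0:ℝ) ≤ t₂ - t) (by linarith : (0:ℝ) ≤ -(7*ε/8) - F x₀),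
          mul_nonneg (by linarith : (0:ℝ) ≤ x₀ - t) (by linarith : (0:ℝ) ≤ F t₂ + 5*ε/16),
          mul_pos (by linarith : (0:ℝ) < t₂ - x₀) hε]
    have h2 := abs_le.1 (happ t ht.1 (by linarith [ht.2]))
    linarith [h2.2]

set_option maxHeartbeats 1000000 in
/-- Lemma A.3: For every `β ∈ [1,2]` and `L > 0` there is `K = K(β,L) ∈ (0,1]`
such that whenever `g, ĝ` are concave real-valued functions on `[A,B]`, `g ∈ H^{β,L}([A,B])`,
`ε > 0` and `0 < δ ≤ K·min(B−A, ε^{1/β})`, if `sup_{[A,B]}(ĝ−g) ≥ ε` or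
`sup_{[A+δ,B−δ]}(g−ĝ) ≥ ε`, then on some interval `[c, c+δ] ⊆ [A,B]` one has `ĝ−g ≥ ε/4`
throughout, or `g−ĝ ≥ ε/4` throughout. -/
theorem concave_sup_implies_inf_on_subinterval :
    ∀ β L : ℝ, β ∈ Set.Icc (1 : ℝ) 2 → 0 < L →
    ∃ K : ℝ, K ∈ Set.Ioc (0 : ℝ) 1 ∧
      ∀ A B : ℝ, A < B →
      ∀ g ghat : ℝ → ℝ,
        ConcaveOn ℝ (Set.Icc A B) g → ConcaveOn ℝ (Set.Icc A B) ghat →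
        HolderClass β L (Set.Icc A B) g →
        ∀ ε δ : ℝ, 0 < ε → 0 < δ → δ ≤ K * min (B - A) (ε ^ (1 / β)) →
        (ε ≤ sSup ((fun t => ghat t - g t) '' Set.Icc A B) ∨
          ε ≤ sSup ((fun t => g t - ghat t) '' Set.Icc (A + δ) (B - δ))) →
        ∃ c ∈ Set.Icc A (B - δ),
          (∀ t ∈ Set.Icc c (c + δ), ε / 4 ≤ ghat t - g t) ∨
          (∀ t ∈ Set.Icc c (c + δ), ε / 4 ≤ g t - ghat t) := by
  intro β L hβ hL
  have hβ0 : (0:ℝ) < β := by linarith [hβ.1]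
  set K : ℝ := min (1/8) (1/(208*L)) with hK
  have hK0 : 0 < K := lt_min (by norm_num) (by positivity)
  have hK8 : K ≤ 1/8 := min_le_left _ _
  have hKL : K ≤ 1/(208*L) := min_le_right _ _
  refine ⟨K, ⟨hK0, hK8.trans (by norm_num)⟩, ?_⟩
  intro A B hAB g ghat hgconc hghatconc hgH ε δ hε hδ hδle hyp
  have hmin0 : 0 ≤ min (B-A) (ε ^ (1/β)) :=
    le_min (by linarith) (Real.rpow_nonneg hε.le _)
  have hδBA : δ ≤ (B-A)/8 := by
    have : K * min (B-A) (ε^(1/β)) ≤ (1/8) * (B-A) :=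
      mul_le_mul hK8 (min_le_left _ _) hmin0 (by norm_num)
    linarith [hδle]
  have hδε : δ ≤ K * ε^(1/β) :=
    hδle.trans (mul_le_mul_of_nonneg_left (min_le_right _ _) hK0.le)
  have hεβ : (ε ^ (1/β)) ^ β = ε := by
    rw [← Real.rpow_mul hε.le, one_div, inv_mul_cancel₀ hβ0.ne', Real.rpow_one]
  have hkey : ∀ d : ℝ, 0 ≤ d → d ≤ 7/2*δ → L * d ^ β ≤ ε/16 := by
    intro d hd0 hd
    have h1 : d ^ β ≤ (7/2*δ) ^ β := Real.rpow_le_rpow hd0 hd hβ0.le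
    have h2 : ((7:ℝ)/2*δ) ^ β = (7/2:ℝ)^β * δ^β := Real.mul_rpow (by norm_num) hδ.le
    have h3 : ((7:ℝ)/2)^β ≤ 13 := by
      have h := Real.rpow_le_rpow_of_exponent_le (by norm_num : (1:ℝ) ≤ 7/2) hβ.2
      have h72 : ((7:ℝ)/2)^(2:ℝ) = 49/4 := by
        rw [show (2:ℝ) = ((2:ℕ):ℝ) by norm_num, Real.rpow_natCast]; norm_num
      linarith
    have h4 : δ ^ β ≤ K^β * ε := by
      calc δ^β ≤ (K * ε^(1/β))^β := Real.rpow_le_rpow hδ.le hδε hβ0.le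
      _ = K^β * (ε^(1/β))^β := Real.mul_rpow hK0.le (Real.rpow_nonneg hε.le _)
      _ = K^β * ε := by rw [hεβ]
    have h5 : K^β ≤ K := by
      have := Real.rpow_le_rpow_of_exponent_ge hK0 (hK8.trans (by norm_num)) hβ.1
      rwa [Real.rpow_one] at this
    have h6 : K * (208*L) ≤ 1 := (le_div_iff₀ (by positivity)).1 hKL
    have hd2 : d^β ≤ 13*(K*ε) := by
      calc d^β ≤ (7/2:ℝ)^β * δ^β := by rw [← h2]; exact h1
      _ ≤ 13 * (K^β*ε) := by
          have hδβ : (0:ℝ) ≤ δ^β := Real.rpow_nonneg hδ.le _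
          nlinarith [Real.rpow_nonneg (show (0:ℝ) ≤ 7/2 by norm_num) β]
      _ ≤ 13 * (K*ε) := by nlinarith
    have := mul_le_mul_of_nonneg_right h6 hε.le
    nlinarith
  -- convenience bound: A + δ ≤ B - δ etc.
  rcases hyp with h1 | h2
  · -- Case 1
    have hne : ((fun t => ghat t - g t) '' Set.Icc A B).Nonempty :=
      ⟨_, Set.mem_image_of_mem _ (Set.left_mem_Icc.2 hAB.le)⟩
    obtain ⟨y, ⟨x₀, hx₀, rfl⟩, hy⟩ :=
      exists_lt_of_lt_csSup hne (lt_of_lt_of_le (by linarith : 7*ε/8 < ε) h1)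
    obtain ⟨m, hm⟩ := holder_tangent hβ hL hgH hx₀
    set F : ℝ → ℝ := fun t => ghat t - g x₀ - m * (t - x₀) with hF
    set D : ℝ → ℝ := fun t => ghat t - g t with hD
    have hchordF : ∀ a c b : ℝ, A ≤ a → a < c → c < b → b ≤ B →
        (b - c) * F a + (c - a) * F b ≤ (b - a) * F c := by
      intro a c b ha hac hcb hb
      have h := chord_of_concave hghatconc (Set.mem_Icc.2 ⟨ha, by linarith⟩)
        (Set.mem_Icc.2 ⟨by linarith, hb⟩) hac hcb
      simp only [hF]
      linear_combination h
    have hDF : ∀ t ∈ Set.Icc A B, |t - x₀| ≤ 7/2*δ → |D t - F t| ≤ ε/16 := by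
      intro t ht hd
      have ha := hm t ht
      have hb := hkey |t - x₀| (abs_nonneg _) hd
      have hc : D t - F t = -(g t - g x₀ - m * (t - x₀)) := by simp only [hD, hF]; ring
      rw [hc, abs_neg]
      linarith
    have hFx₀ : 7*ε/8 < F x₀ := by simp only [hF]; simpa using hy
    rcases le_or_gt x₀ ((A+B)/2) with hmid | hmid
    · have hxB' : x₀ + 7/2*δ ≤ B := by linarith
      obtain ⟨c, hc1, hc2, hc3⟩ := aux_case1 ε δ A B x₀ D F hε hδ hx₀.1 hxB' hchordF hFx₀
        (fun t h1t h2t => hDF t ⟨by linarith [hx₀.1], by linarith⟩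
          (by rw [abs_of_nonneg (by linarith)]; linarith))
      refine ⟨c, Set.mem_Icc.2 ⟨hc1, by linarith⟩, ?_⟩
      rcases hc3 with h | h
      · exact Or.inl fun t ht => by have := h t ht; simp only [hD] at this; linarith
      · exact Or.inr fun t ht => by have := h t ht; simp only [hD] at this; linarith
    · obtain ⟨c, hc1, hc2, hc3⟩ := aux_case1 ε δ (-B) (-A) (-x₀)
        (fun t => D (-t)) (fun t => F (-t)) hε hδ
        (by linarith [hx₀.2]) (by linarith)
        (fun a c b ha hac hcb hb => by
          have h := hchordF (-b) (-c) (-a) (by linarith) (by linarith) (by linarith)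
            (by linarith)
          linear_combination h)
        (by simpa using hFx₀)
        (fun t h1t h2t => by
          have h := hDF (-t) ⟨by linarith, by linarith [hx₀.2]⟩
            (by rw [abs_of_nonpos (by linarith)]; linarith)
          simpa using h)
      refine ⟨-(c+δ), Set.mem_Icc.2 ⟨by linarith, by linarith⟩, ?_⟩
      rcases hc3 with h | h
      · refine Or.inl fun t ht => ?_
        have := h (-t) ⟨by linarith [ht.2], by linarith [ht.1]⟩
        simp only [hD, neg_neg] at this; linarith
      · refine Or.inr fun t ht => ?_
        have := h (-t) ⟨by linarith [ht.2], by linarith [ht.1]⟩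
        simp only [hD, neg_neg] at this; linarith
  · -- Case 2
    have hAδB : A + δ ≤ B - δ := by linarith
    have hne : ((fun t => g t - ghat t) '' Set.Icc (A+δ) (B-δ)).Nonempty :=
      ⟨_, Set.mem_image_of_mem _ (Set.left_mem_Icc.2 hAδB)⟩
    obtain ⟨y, ⟨x₀, hx₀, rfl⟩, hy⟩ :=
      exists_lt_of_lt_csSup hne (lt_of_lt_of_le (by linarith : 7*ε/8 < ε) h2)
    have hx₀AB : x₀ ∈ Set.Icc A B := ⟨by linarith [hx₀.1], by linarith [hx₀.2]⟩
    obtain ⟨m, hm⟩ := holder_tangent hβ hL hgH hx₀AB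
    set F : ℝ → ℝ := fun t => ghat t - g x₀ - m * (t - x₀) with hF
    set D : ℝ → ℝ := fun t => ghat t - g t with hD
    have hchordF : ∀ a c b : ℝ, A ≤ a → a < c → c < b → b ≤ B →
        (b - c) * F a + (c - a) * F b ≤ (b - a) * F c := by
      intro a c b ha hac hcb hb
      have h := chord_of_concave hghatconc (Set.mem_Icc.2 ⟨ha, by linarith⟩)
        (Set.mem_Icc.2 ⟨by linarith, hb⟩) hac hcb
      simp only [hF]
      linear_combination h
    have hDF : ∀ t ∈ Set.Icc A B, |t - x₀| ≤ 7/2*δ → |D t - F t| ≤ ε/16 := by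
      intro t ht hd
      have ha := hm t ht
      have hb := hkey |t - x₀| (abs_nonneg _) hd
      have hc : D t - F t = -(g t - g x₀ - m * (t - x₀)) := by simp only [hD, hF]; ring
      rw [hc, abs_neg]
      linarith
    have hFx₀ : F x₀ < -(7*ε/8) := by
      simp only [hF]
      simp only [Set.mem_Icc] at hy ⊢
      have : ghat x₀ - g x₀ - m * (x₀ - x₀) = -(g x₀ - ghat x₀) := by ring
      rw [this]; linarith
    obtain ⟨c, hc1, hc2, hc3⟩ := aux_case2 ε δ A B x₀ D F hε hδ hx₀.1 hx₀.2 hchordF hFx₀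
      (fun t h1t h2t => hDF t ⟨by linarith [hx₀.1], by linarith [hx₀.2]⟩
        (by rw [abs_le]; constructor <;> linarith))
    refine ⟨c, Set.mem_Icc.2 ⟨hc1, by linarith⟩, ?_⟩
    rcases hc3 with h | h
    · exact Or.inl fun t ht => by have := h t ht; simp only [hD] at this; linarith
    · exact Or.inr fun t ht => by have := h t ht; simp only [hD] at this; linarith
end

section
/- Let Y be a real random variable with E(Y) = 0, E(Y²) = σ², and C := E exp(|Y|) < ∞. Then for every t ∈ ℝ with |t| < 1: E exp(tY) ≤ 1 + σ²t²/2 + C|t|³/(1 − |t|). -/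
open MeasureTheory

lemma pow_div_fact_le_exp (x : ℝ) (hx : 0 ≤ x) (n : ℕ) :
    x ^ n / n.factorial ≤ Real.exp x := by
  refine le_trans ?_ (Real.sum_le_exp_of_nonneg hx (n + 1))
  have := Finset.single_le_sum (f := fun i => x ^ i / (Nat.factorial i : ℝ))
    (fun i _ => by positivity) (Finset.self_mem_range_succ n)
  simpa using this

lemma exp_tsum_eq (x : ℝ) : Real.exp x = ∑' n : ℕ, x ^ n / n.factorial := by
  rw [Real.exp_eq_exp_ℝ, NormedSpace.exp_eq_tsum_div]

lemma key_pointwise (t y : ℝ) (ht : |t| < 1) :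
    Real.exp (t * y) ≤ 1 + t * y + t ^ 2 * y ^ 2 / 2
      + |t| ^ 3 * Real.exp |y| / (1 - |t|) := by
  have hs0 : (0:ℝ) ≤ |t| := abs_nonneg t
  have hy0 : (0:ℝ) ≤ |y| := abs_nonneg y
  have hsum := Real.summable_pow_div_factorial (t * y)
  have hsplit := Summable.sum_add_tsum_nat_add 3 hsum
  have hgeo : Summable (fun n : ℕ => |t| ^ n * (|t| ^ 3 * Real.exp |y|)) :=
    (summable_geometric_of_lt_one hs0 ht).mul_right _
  have htail : (∑' n : ℕ, (t * y) ^ (n + 3) / (n + 3).factorial)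
      ≤ ∑' n : ℕ, |t| ^ n * (|t| ^ 3 * Real.exp |y|) := by
    refine Summable.tsum_le_tsum (fun n => ?_) ((summable_nat_add_iff 3).2 hsum) hgeo
    have h1 : (t * y) ^ (n + 3) / (n + 3).factorial
        ≤ |t * y| ^ (n + 3) / (n + 3).factorial := by
      have hp : (t * y) ^ (n + 3) ≤ |t * y| ^ (n + 3) :=
        le_trans (le_abs_self _) (by rw [abs_pow])
      exact div_le_div_of_nonneg_right hp (by positivity) |>.trans_eq rfl
    refine h1.trans ?_
    rw [abs_mul, mul_pow, mul_div_assoc]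
    have h2 : |y| ^ (n + 3) / ((n + 3).factorial : ℝ) ≤ Real.exp |y| :=
      pow_div_fact_le_exp _ hy0 _
    calc |t| ^ (n + 3) * (|y| ^ (n + 3) / ((n + 3).factorial : ℝ))
        ≤ |t| ^ (n + 3) * Real.exp |y| := by gcongr
      _ = |t| ^ n * (|t| ^ 3 * Real.exp |y|) := by ring
  have hgeoval : (∑' n : ℕ, |t| ^ n * (|t| ^ 3 * Real.exp |y|))
      = |t| ^ 3 * Real.exp |y| / (1 - |t|) := by
    rw [tsum_mul_right, tsum_geometric_of_lt_one hs0 ht]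
    field_simp
  have hhead : (∑ n ∈ Finset.range 3, (t * y) ^ n / (n.factorial : ℝ))
      = 1 + t * y + t ^ 2 * y ^ 2 / 2 := by
    simp [Finset.sum_range_succ, Nat.factorial]
    ring
  calc Real.exp (t * y) = ∑' n : ℕ, (t * y) ^ n / n.factorial := exp_tsum_eq _
    _ = (∑ n ∈ Finset.range 3, (t * y) ^ n / (n.factorial : ℝ))
        + ∑' n : ℕ, (t * y) ^ (n + 3) / (n + 3).factorial := hsplit.symm
    _ ≤ (1 + t * y + t ^ 2 * y ^ 2 / 2) + |t| ^ 3 * Real.exp |y| / (1 - |t|) := by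
        rw [hhead]; exact add_le_add_right (htail.trans_eq hgeoval) _
    _ = _ := by ring

/-- If `Y` is a real random variable with `E Y = 0`, `E Y² = σ²` and
`C := E exp|Y| < ∞`, then for every `t` with `|t| < 1`:
`E exp(tY) ≤ 1 + σ²t²/2 + C|t|³/(1 − |t|)`. -/
theorem mgf_bound_of_exp_moment
    {Ω : Type*} [MeasurableSpace Ω] (P : Measure Ω) [IsProbabilityMeasure P]
    (Y : Ω → ℝ) (hYmeas : Measurable Y)
    (σ C : ℝ)
    (hexp_int : Integrable (fun ω => Real.exp |Y ω|) P)
    (hmean : ∫ ω, Y ω ∂P = 0)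
    (hvar : ∫ ω, (Y ω) ^ 2 ∂P = σ ^ 2)
    (hC : ∫ ω, Real.exp |Y ω| ∂P = C)
    (t : ℝ) (ht : |t| < 1) :
    ∫ ω, Real.exp (t * Y ω) ∂P ≤ 1 + σ ^ 2 * t ^ 2 / 2 + C * |t| ^ 3 / (1 - |t|) := by
  have hY_int : Integrable Y P := by
    refine hexp_int.mono hYmeas.aestronglyMeasurable (ae_of_all _ fun ω => ?_)
    simp only [Real.norm_eq_abs, Real.abs_exp]
    calc |Y ω| ≤ |Y ω| + 1 := by linarith
      _ ≤ Real.exp |Y ω| := Real.add_one_le_exp _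
  have hY2_int : Integrable (fun ω => (Y ω) ^ 2) P := by
    refine (hexp_int.const_mul 2).mono
      ((hYmeas.pow_const 2).aestronglyMeasurable) (ae_of_all _ fun ω => ?_)
    simp only [Real.norm_eq_abs]
    rw [abs_of_nonneg (by positivity), abs_of_nonneg (by positivity)]
    have := pow_div_fact_le_exp |Y ω| (abs_nonneg _) 2
    rw [sq_abs] at this
    simp [Nat.factorial] at this
    nlinarith [Real.exp_pos |Y ω|]
  have hexpt_int : Integrable (fun ω => Real.exp (t * Y ω)) P := by
    refine hexp_int.mono ((Real.measurable_exp.comp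
      (hYmeas.const_mul t)).aestronglyMeasurable) (ae_of_all _ fun ω => ?_)
    simp only [Real.norm_eq_abs, Real.abs_exp]
    refine Real.exp_le_exp.2 ?_
    calc t * Y ω ≤ |t * Y ω| := le_abs_self _
      _ = |t| * |Y ω| := abs_mul _ _
      _ ≤ 1 * |Y ω| := mul_le_mul_of_nonneg_right ht.le (abs_nonneg _)
      _ = |Y ω| := one_mul _
  have h1i : Integrable (fun ω => 1 + t * Y ω) P := (integrable_const 1).add (hY_int.const_mul t)
  have h2i : Integrable (fun ω => t ^ 2 * (Y ω) ^ 2 / 2) P := (hY2_int.const_mul (t ^ 2)).div_const 2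
  have h3i : Integrable (fun ω => |t| ^ 3 * Real.exp |Y ω| / (1 - |t|)) P :=
    (hexp_int.const_mul (|t| ^ 3)).div_const (1 - |t|)
  have hrhs_int : Integrable (fun ω =>
      1 + t * Y ω + t ^ 2 * (Y ω) ^ 2 / 2
        + |t| ^ 3 * Real.exp |Y ω| / (1 - |t|)) P := (h1i.add h2i).add h3i
  have h12i : Integrable (fun ω => 1 + t * Y ω + t ^ 2 * (Y ω) ^ 2 / 2) P := h1i.add h2i
  have hmono : ∫ ω, Real.exp (t * Y ω) ∂P
      ≤ ∫ ω, (1 + t * Y ω + t ^ 2 * (Y ω) ^ 2 / 2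
        + |t| ^ 3 * Real.exp |Y ω| / (1 - |t|)) ∂P := by
    refine integral_mono hexpt_int hrhs_int fun ω => ?_
    exact key_pointwise t (Y ω) ht
  refine hmono.trans_eq ?_
  rw [integral_add h12i h3i, integral_add h1i h2i,
    integral_add (integrable_const 1) (hY_int.const_mul t)]
  simp only [integral_const, measure_univ, probReal_univ, ENNReal.toReal_one, smul_eq_mul, one_mul]
  rw [integral_const_mul t, hmean]
  have h2 : ∫ ω, t ^ 2 * (Y ω) ^ 2 / 2 ∂P = t ^ 2 * σ ^ 2 / 2 := by
    simp_rw [mul_div_assoc]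
    rw [integral_const_mul, integral_div, hvar]
  have h3 : ∫ ω, |t| ^ 3 * Real.exp |Y ω| / (1 - |t|) ∂P = |t| ^ 3 * C / (1 - |t|) := by
    simp_rw [mul_div_assoc]
    rw [integral_const_mul, integral_div, hC]
  rw [h2, h3]
  ring
end

section
/- Let Y_1, …, Y_n be i.i.d. real random variables with E(Y_1) = 0, E(Y_1²) = σ², and C := E exp(|Y_1|) < ∞. Then for every η > 0 and every t with 0 < t < n: ℙ(|(1/n) Σ_{i=1}^n Y_i| ≥ η) ≤ 2·exp(σ²t²/(2n) + C·t³/(n²·(1 − t/n)) − t·η). -/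
open MeasureTheory ProbabilityTheory

lemma aux_nonneg_of_deriv (g g' : ℝ → ℝ) (hg : ∀ u, HasDerivAt g (g' u) u)
    (h0 : 0 ≤ g 0) (h' : ∀ u, 0 ≤ u → 0 ≤ g' u) : ∀ u, 0 ≤ u → 0 ≤ g u := by
  intro u hu
  have mono : MonotoneOn g (Set.Ici 0) := by
    apply monotoneOn_of_deriv_nonneg (convex_Ici 0)
    · exact fun x _ => (hg x).continuousAt.continuousWithinAt
    · exact fun x _ => (hg x).differentiableAt.differentiableWithinAt
    · intro x hx
      rw [(hg x).deriv]
      exact h' x (le_of_lt (by simpa using hx))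
  have := mono (Set.self_mem_Ici) (by exact hu) hu
  linarith

lemma aux_exp_quadratic_of_nonpos {x : ℝ} (hx : x ≤ 0) :
    Real.exp x ≤ 1 + x + x ^ 2 / 2 := by
  have key : ∀ u, 0 ≤ u → 0 ≤ 1 + (-u) + (-u) ^ 2 / 2 - Real.exp (-u) := by
    apply aux_nonneg_of_deriv _ (fun u => Real.exp (-u) - (1 - u))
    · intro u
      have h1 : HasDerivAt (fun u : ℝ => Real.exp (-u)) (-Real.exp (-u)) u := by
        simpa using ((hasDerivAt_id u).neg).exp
      have h2 : HasDerivAt (fun u : ℝ => 1 + (-u) + (-u) ^ 2 / 2) (-1 + u) u := by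
        have : HasDerivAt (fun u : ℝ => 1 + (-u) + (-u) ^ 2 / 2)
            (0 + (-1) + (2 * (-u) ^ 1 * (-1)) / 2) u := by
          exact (((hasDerivAt_const u (1:ℝ)).add ((hasDerivAt_id u).neg)).add
            (((hasDerivAt_id u).neg.pow 2).div_const 2))
        convert this using 1; ring
      have := h2.sub h1
      exact this.congr_deriv (by ring)
    · simp
    · intro u hu
      have := Real.add_one_le_exp (-u)
      linarith
  have := key (-x) (by linarith)
  simp only [neg_neg] at this
  linarith

lemma aux_exp_key {s : ℝ} (hs0 : 0 < s) (hs1 : s < 1) (z : ℝ) :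
    Real.exp (s * z) ≤ 1 + s * z + s ^ 2 * z ^ 2 / 2 + s ^ 3 / (1 - s) * Real.exp |z| := by
  set A := s ^ 3 / (1 - s) with hA
  have hApos : 0 < A := div_pos (by positivity) (by linarith)
  rcases le_or_gt z 0 with hz | hz
  · have h1 : Real.exp (s * z) ≤ 1 + s * z + (s * z) ^ 2 / 2 :=
      aux_exp_quadratic_of_nonpos (by nlinarith)
    have h2 : 0 < A * Real.exp |z| := by positivity
    nlinarith [h1, h2]
  · -- z > 0 case: three-step derivative argument
    have hf2 : ∀ u, 0 ≤ u → 0 ≤ A * Real.exp u + s ^ 2 - s ^ 2 * Real.exp (s * u) := by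
      apply aux_nonneg_of_deriv _ (fun u => A * Real.exp u - s ^ 3 * Real.exp (s * u))
      · intro u
        have hsu : HasDerivAt (fun u : ℝ => Real.exp (s * u)) (Real.exp (s * u) * s) u :=
          by simpa using ((hasDerivAt_id u).const_mul s).exp
        have := (((Real.hasDerivAt_exp u).const_mul A).add (hasDerivAt_const u (s ^ 2))).sub
          (hsu.const_mul (s ^ 2))
        exact this.congr_deriv (by ring)
      · simp [hApos.le]
      · intro u hu
        have h1 : Real.exp (s * u) ≤ Real.exp u :=
          Real.exp_le_exp.2 (by nlinarith)
        have h2 : s ^ 3 ≤ A := by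
          rw [hA, le_div_iff₀ (by linarith)]
          nlinarith [pow_pos hs0 3]
        nlinarith [Real.exp_pos (s * u), Real.exp_pos u]
    have hf1 : ∀ u, 0 ≤ u → 0 ≤ A * Real.exp u + (s + s ^ 2 * u) - s * Real.exp (s * u) := by
      apply aux_nonneg_of_deriv _
        (fun u => A * Real.exp u + s ^ 2 - s ^ 2 * Real.exp (s * u))
      · intro u
        have hsu : HasDerivAt (fun u : ℝ => Real.exp (s * u)) (Real.exp (s * u) * s) u :=
          by simpa using ((hasDerivAt_id u).const_mul s).exp
        have := (((Real.hasDerivAt_exp u).const_mul A).add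
          ((hasDerivAt_const u s).add ((hasDerivAt_id u).const_mul (s ^ 2)))).sub
          (hsu.const_mul s)
        exact this.congr_deriv (by ring)
      · simp [hApos.le]
      · exact hf2
    have hf0 : ∀ u, 0 ≤ u →
        0 ≤ A * Real.exp u + (1 + s * u + s ^ 2 * u ^ 2 / 2) - Real.exp (s * u) := by
      apply aux_nonneg_of_deriv _
        (fun u => A * Real.exp u + (s + s ^ 2 * u) - s * Real.exp (s * u))
      · intro u
        have hsu : HasDerivAt (fun u : ℝ => Real.exp (s * u)) (Real.exp (s * u) * s) u :=
          by simpa using ((hasDerivAt_id u).const_mul s).exp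
        have := (((Real.hasDerivAt_exp u).const_mul A).add
          (((hasDerivAt_const u (1:ℝ)).add ((hasDerivAt_id u).const_mul s)).add
            ((((hasDerivAt_id u).pow 2).const_mul (s ^ 2)).div_const 2))).sub hsu
        exact this.congr_deriv (by simp only [id]; ring)
      · simp [hApos.le]
      · exact hf1
    have := hf0 z hz.le
    rw [abs_of_pos hz]
    linarith

lemma aux_int_exp_mul {Ω : Type*} [MeasurableSpace Ω] {P : Measure Ω} [IsProbabilityMeasure P]
    {Z : Ω → ℝ} (hZ : Measurable Z) (hint : Integrable (fun ω => Real.exp |Z ω|) P)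
    {r : ℝ} (hr : |r| ≤ 1) : Integrable (fun ω => Real.exp (r * Z ω)) P := by
  refine hint.mono' ((hZ.const_mul r).exp.aestronglyMeasurable) (ae_of_all _ fun ω => ?_)
  rw [Real.norm_eq_abs, abs_of_pos (Real.exp_pos _)]
  apply Real.exp_le_exp.2
  calc r * Z ω ≤ |r * Z ω| := le_abs_self _
    _ = |r| * |Z ω| := abs_mul _ _
    _ ≤ 1 * |Z ω| := by gcongr
    _ = |Z ω| := one_mul _

lemma aux_mgf_bound {Ω : Type*} [MeasurableSpace Ω] (P : Measure Ω) [IsProbabilityMeasure P]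
    (Z : Ω → ℝ) (hZ : Measurable Z) (hint : Integrable (fun ω => Real.exp |Z ω|) P)
    (σ C s : ℝ) (hm : ∫ ω, Z ω ∂P = 0) (hv : ∫ ω, Z ω ^ 2 ∂P = σ ^ 2)
    (hCv : ∫ ω, Real.exp |Z ω| ∂P = C) (hs0 : 0 < s) (hs1 : s < 1) :
    ∫ ω, Real.exp (s * Z ω) ∂P ≤ Real.exp (σ ^ 2 * s ^ 2 / 2 + C * s ^ 3 / (1 - s)) := by
  set A := s ^ 3 / (1 - s) with hA
  have hintZ : Integrable Z P := by
    refine hint.mono' hZ.aestronglyMeasurable (ae_of_all _ fun ω => ?_)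
    rw [Real.norm_eq_abs]
    have := Real.add_one_le_exp |Z ω|
    linarith
  have hintZ2 : Integrable (fun ω => Z ω ^ 2) P := by
    refine (hint.const_mul 4).mono' ((hZ.pow_const 2).aestronglyMeasurable)
      (ae_of_all _ fun ω => ?_)
    rw [Real.norm_eq_abs, abs_of_nonneg (sq_nonneg _)]
    have h1 := Real.add_one_le_exp (|Z ω| / 2)
    have h2 : Real.exp |Z ω| = Real.exp (|Z ω| / 2) ^ 2 := by
      rw [← Real.exp_nat_mul]; norm_num; ring
    have h3 := abs_nonneg (Z ω)
    have h4 : |Z ω| ^ 2 = Z ω ^ 2 := sq_abs _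
    nlinarith [Real.exp_pos (|Z ω| / 2)]
  have hintexp : Integrable (fun ω => Real.exp (s * Z ω)) P :=
    aux_int_exp_mul hZ hint (by rw [abs_of_pos hs0]; exact hs1.le)
  have I1 : Integrable (fun _ : Ω => (1 : ℝ)) P := integrable_const 1
  have I2 := hintZ.const_mul s
  have I3 := hintZ2.const_mul (s ^ 2 / 2)
  have I4 := hint.const_mul A
  have hpt : ∀ ω, Real.exp (s * Z ω) ≤
      1 + s * Z ω + s ^ 2 / 2 * Z ω ^ 2 + A * Real.exp |Z ω| := by
    intro ω
    have := aux_exp_key hs0 hs1 (Z ω)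
    rw [← hA] at this
    nlinarith [this]
  have hle : ∫ ω, Real.exp (s * Z ω) ∂P ≤
      ∫ ω, (1 + s * Z ω + s ^ 2 / 2 * Z ω ^ 2 + A * Real.exp |Z ω|) ∂P := by
    refine integral_mono hintexp (((I1.add I2).add I3).add I4) hpt
  have heq : ∫ ω, (1 + s * Z ω + s ^ 2 / 2 * Z ω ^ 2 + A * Real.exp |Z ω|) ∂P =
      1 + s ^ 2 / 2 * σ ^ 2 + A * C := by
    have e1 : ∫ ω, (1 + s * Z ω + s ^ 2 / 2 * Z ω ^ 2 + A * Real.exp |Z ω|) ∂P =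
        ∫ ω, (1 + s * Z ω + s ^ 2 / 2 * Z ω ^ 2) ∂P + ∫ ω, A * Real.exp |Z ω| ∂P :=
      integral_add ((I1.add I2).add I3) I4
    have e2 : ∫ ω, (1 + s * Z ω + s ^ 2 / 2 * Z ω ^ 2) ∂P =
        ∫ ω, (1 + s * Z ω) ∂P + ∫ ω, s ^ 2 / 2 * Z ω ^ 2 ∂P := integral_add (I1.add I2) I3
    have e3 : ∫ ω, (1 + s * Z ω) ∂P = ∫ ω, (1 : ℝ) ∂P + ∫ ω, s * Z ω ∂P := integral_add I1 I2
    rw [e1, e2, e3, integral_const_mul, integral_const_mul, integral_const_mul,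
      hm, hv, hCv, integral_const]
    simp
  rw [heq] at hle
  have hfin : 1 + s ^ 2 / 2 * σ ^ 2 + A * C ≤
      Real.exp (σ ^ 2 * s ^ 2 / 2 + C * s ^ 3 / (1 - s)) := by
    have h1 := Real.add_one_le_exp (σ ^ 2 * s ^ 2 / 2 + C * s ^ 3 / (1 - s))
    have h2 : A * C = C * s ^ 3 / (1 - s) := by rw [hA]; ring
    nlinarith [h1, h2]
  linarith

/-- For i.i.d. real random variables `Y₁, …, Yₙ` with mean `0`, second moment
`σ²` and `C := E exp|Y₁| < ∞`, for every `η > 0` and `0 < t < n`: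
`ℙ(|(1/n) Σᵢ Yᵢ| ≥ η) ≤ 2·exp(σ²t²/(2n) + C·t³/(n²·(1 − t/n)) − t·η)`. -/
theorem iid_exponential_inequality
    {Ω : Type*} [MeasurableSpace Ω] (P : Measure Ω) [IsProbabilityMeasure P]
    (n : ℕ) (Y : Fin n → Ω → ℝ)
    (hYmeas : ∀ i, Measurable (Y i))
    (hindep : iIndepFun Y P)
    (hident : ∀ i j, Measure.map (Y i) P = Measure.map (Y j) P)
    (σ C : ℝ)
    (hexp_int : ∀ i, Integrable (fun ω => Real.exp |Y i ω|) P)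
    (hmean : ∀ i, ∫ ω, Y i ω ∂P = 0)
    (hvar : ∀ i, ∫ ω, (Y i ω) ^ 2 ∂P = σ ^ 2)
    (hC : ∀ i, ∫ ω, Real.exp |Y i ω| ∂P = C)
    (η t : ℝ) (hη : 0 < η) (ht : 0 < t) (htn : t < n) :
    P {ω | η ≤ |(∑ i, Y i ω) / n|} ≤
      ENNReal.ofReal (2 * Real.exp (σ ^ 2 * t ^ 2 / (2 * n) +
        C * t ^ 3 / (n ^ 2 * (1 - t / n)) - t * η)) := by
  have hn : (0 : ℝ) < n := lt_trans ht htn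
  have hnne : (n : ℝ) ≠ 0 := hn.ne'
  set s : ℝ := t / n with hs
  have hs0 : 0 < s := div_pos ht hn
  have hs1 : s < 1 := (div_lt_one hn).2 htn
  set K : ℝ := σ ^ 2 * s ^ 2 / 2 + C * s ^ 3 / (1 - s) with hK
  set E : ℝ := σ ^ 2 * t ^ 2 / (2 * n) + C * t ^ 3 / (n ^ 2 * (1 - t / n)) - t * η with hE
  -- per-variable mgf bounds
  have hbound_pos : ∀ i, mgf (Y i) P s ≤ Real.exp K := fun i =>
    aux_mgf_bound P (Y i) (hYmeas i) (hexp_int i) σ C s (hmean i) (hvar i) (hC i) hs0 hs1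
  have hbound_neg : ∀ i, mgf (Y i) P (-s) ≤ Real.exp K := by
    intro i
    have h := aux_mgf_bound P (fun ω => -(Y i ω)) (hYmeas i).neg
      (by simpa using hexp_int i) σ C s
      (by rw [integral_neg, hmean i, neg_zero])
      (by simpa using hvar i)
      (by simpa using hC i) hs0 hs1
    have : mgf (Y i) P (-s) = ∫ ω, Real.exp (s * -(Y i ω)) ∂P := by
      unfold mgf; congr 1; funext ω; ring_nf
    rw [this]
    exact h
  -- integrability of exponentials
  have hint_pos : ∀ i ∈ Finset.univ, Integrable (fun ω => Real.exp (s * Y i ω)) P :=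
    fun i _ => aux_int_exp_mul (hYmeas i) (hexp_int i) (by rw [abs_of_pos hs0]; exact hs1.le)
  have hint_neg : ∀ i ∈ Finset.univ, Integrable (fun ω => Real.exp (-s * Y i ω)) P :=
    fun i _ => aux_int_exp_mul (hYmeas i) (hexp_int i)
      (by rw [abs_neg, abs_of_pos hs0]; exact hs1.le)
  have hIntS_pos := hindep.integrable_exp_mul_sum hYmeas hint_pos
  have hIntS_neg := hindep.integrable_exp_mul_sum hYmeas hint_neg
  -- product bound
  have hprod : ∀ r : ℝ, (∀ i, mgf (Y i) P r ≤ Real.exp K) →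
      mgf (∑ i, Y i) P r ≤ Real.exp K ^ n := by
    intro r hr
    rw [hindep.mgf_sum hYmeas Finset.univ]
    calc ∏ i, mgf (Y i) P r ≤ ∏ _i : Fin n, Real.exp K :=
          Finset.prod_le_prod (fun i _ => mgf_nonneg) (fun i _ => hr i)
      _ = Real.exp K ^ n := by rw [Finset.prod_const, Finset.card_univ, Fintype.card_fin]
  -- exponent algebra
  have hexp_eq : Real.exp (-s * ((n : ℝ) * η)) * Real.exp K ^ n = Real.exp E := by
    rw [← Real.exp_nat_mul, ← Real.exp_add]
    congr 1
    have hnt : (n : ℝ) - t ≠ 0 := by linarith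
    have h1mt : 1 - t / (n : ℝ) = ((n : ℝ) - t) / n := by field_simp
    rw [hK, hE, hs, h1mt]
    field_simp
    ring
  -- Chernoff for upper tail
  have h1 : (P {ω | (n : ℝ) * η ≤ (∑ i, Y i) ω}).toReal ≤ Real.exp E := by
    calc (P {ω | (n : ℝ) * η ≤ (∑ i, Y i) ω}).toReal
        ≤ Real.exp (-s * ((n : ℝ) * η)) * mgf (∑ i, Y i) P s :=
          measure_ge_le_exp_mul_mgf ((n : ℝ) * η) hs0.le hIntS_pos
      _ ≤ Real.exp (-s * ((n : ℝ) * η)) * Real.exp K ^ n := by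
          gcongr
          exact hprod s hbound_pos
      _ = Real.exp E := hexp_eq
  -- Chernoff for lower tail
  have h2 : (P {ω | (∑ i, Y i) ω ≤ -((n : ℝ) * η)}).toReal ≤ Real.exp E := by
    calc (P {ω | (∑ i, Y i) ω ≤ -((n : ℝ) * η)}).toReal
        ≤ Real.exp (-(-s) * -((n : ℝ) * η)) * mgf (∑ i, Y i) P (-s) :=
          measure_le_le_exp_mul_mgf (-((n : ℝ) * η)) (neg_nonpos.2 hs0.le) hIntS_neg
      _ ≤ Real.exp (-s * ((n : ℝ) * η)) * Real.exp K ^ n := by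
          rw [show -(-s) * -((n : ℝ) * η) = -s * ((n : ℝ) * η) by ring]
          gcongr
          exact hprod (-s) hbound_neg
      _ = Real.exp E := hexp_eq
  -- set inclusion
  have hsub : {ω | η ≤ |(∑ i, Y i ω) / n|} ⊆
      {ω | (n : ℝ) * η ≤ (∑ i, Y i) ω} ∪ {ω | (∑ i, Y i) ω ≤ -((n : ℝ) * η)} := by
    intro ω hω
    simp only [Set.mem_setOf_eq, Set.mem_union, Finset.sum_apply]
    simp only [Set.mem_setOf_eq] at hω
    rw [abs_div, abs_of_pos hn, le_div_iff₀ hn] at hω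
    rcases le_abs.mp (by linarith : (n : ℝ) * η ≤ |∑ i, Y i ω|) with h | h
    · left; exact h
    · right; linarith
  -- assemble
  have hstep : P {ω | η ≤ |(∑ i, Y i ω) / n|} ≤
      P {ω | (n : ℝ) * η ≤ (∑ i, Y i) ω} + P {ω | (∑ i, Y i) ω ≤ -((n : ℝ) * η)} :=
    le_trans (measure_mono hsub) (measure_union_le _ _)
  have hA := (ENNReal.le_ofReal_iff_toReal_le (measure_ne_top P _) (Real.exp_nonneg _)).2 h1
  have hB := (ENNReal.le_ofReal_iff_toReal_le (measure_ne_top P _) (Real.exp_nonneg _)).2 h2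
  calc P {ω | η ≤ |(∑ i, Y i ω) / n|}
      ≤ ENNReal.ofReal (Real.exp E) + ENNReal.ofReal (Real.exp E) :=
        le_trans hstep (add_le_add hA hB)
    _ = ENNReal.ofReal (2 * Real.exp E) := by
        rw [← ENNReal.ofReal_add (Real.exp_nonneg _) (Real.exp_nonneg _), two_mul]
end

section
/- Let a < b be real, C > 0, and let φ : [a, b] → ℝ be continuous on [a, b] and differentiable on (a, b) with φ'(x) − φ'(y) ≥ C(y − x) for all a < x < y < b. Then for every affine function g : ℝ → ℝ: sup_{x ∈ [a,b]} |φ(x) − g(x)| ≥ C(b − a)²/16. -/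
/-- If `φ` is continuous on `[a,b]`, differentiable on `(a,b)` with derivative
`φ'` satisfying `φ'(x) − φ'(y) ≥ C(y − x)` for `a < x < y < b`, then for every affine
function `g`, `sup_{x ∈ [a,b]} |φ(x) − g(x)| ≥ C(b−a)²/16`. -/
theorem strongly_concave_affine_approx_lower_bound
    (a b C : ℝ) (hab : a < b) (hC : 0 < C)
    (phi phi' : ℝ → ℝ)
    (hcont : ContinuousOn phi (Set.Icc a b))
    (hderiv : ∀ x ∈ Set.Ioo a b, HasDerivAt phi (phi' x) x)
    (hstrong : ∀ x y : ℝ, a < x → x < y → y < b → C * (y - x) ≤ phi' x - phi' y)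
    (g : ℝ → ℝ) (hg : ∃ α γ : ℝ, ∀ x, g x = α + γ * x) :
    C * (b - a) ^ 2 / 16 ≤ sSup ((fun x => |phi x - g x|) '' Set.Icc a b) := by
  obtain ⟨α, γ, hgdef⟩ := hg
  set m : ℝ := (a + b) / 2 with hm
  have ham : a < m := by simp [hm]; linarith
  have hmb : m < b := by simp [hm]; linarith
  -- ψ = φ + C x²/2 is concave; use MVT on [a,m] and [m,b]
  set ψ : ℝ → ℝ := fun x => phi x + C * x ^ 2 / 2 with hψ
  set ψ' : ℝ → ℝ := fun x => phi' x + C * x with hψ'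
  have hψcont : ContinuousOn ψ (Set.Icc a b) := by
    apply hcont.add
    fun_prop
  have hψderiv : ∀ x ∈ Set.Ioo a b, HasDerivAt ψ (ψ' x) x := by
    intro x hx
    have h1 := hderiv x hx
    have h2 : HasDerivAt (fun x : ℝ => C * x ^ 2 / 2) (C * x) x := by
      have := ((hasDerivAt_pow 2 x).const_mul C).div_const 2
      convert this using 1
      exacts [rfl, rfl, by push_cast; ring]
    simpa [ψ, ψ'] using h1.fun_add h2
  obtain ⟨ξ, hξ, hξeq⟩ := exists_hasDerivAt_eq_slope ψ ψ' ham
    (hψcont.mono (Set.Icc_subset_Icc le_rfl hmb.le))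
    (fun x hx => hψderiv x ⟨hx.1, hx.2.trans hmb⟩)
  obtain ⟨η, hη, hηeq⟩ := exists_hasDerivAt_eq_slope ψ ψ' hmb
    (hψcont.mono (Set.Icc_subset_Icc ham.le le_rfl))
    (fun x hx => hψderiv x ⟨ham.trans hx.1, hx.2⟩)
  have hξη : ξ < η := hξ.2.trans hη.1
  have hmono : ψ' η ≤ ψ' ξ := by
    have := hstrong ξ η hξ.1 hξη hη.2
    simp only [ψ']
    nlinarith
  have hlen : m - a = (b - a) / 2 := by simp [hm]; ring
  have hlen2 : b - m = (b - a) / 2 := by simp [hm]; ring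
  have hpos : (0:ℝ) < (b - a) / 2 := by linarith
  -- ψ m - ψ a ≥ ψ b - ψ m
  have hkey1 : ψ b - ψ m ≤ ψ m - ψ a := by
    rw [hlen] at hξeq
    rw [hlen2] at hηeq
    have h1 : ψ m - ψ a = ψ' ξ * ((b - a) / 2) := by
      rw [hξeq, div_mul_cancel₀ _ hpos.ne']
    have h2 : ψ b - ψ m = ψ' η * ((b - a) / 2) := by
      rw [hηeq, div_mul_cancel₀ _ hpos.ne']
    rw [h1, h2]
    exact mul_le_mul_of_nonneg_right hmono hpos.le
  -- key: phi m - (phi a + phi b)/2 ≥ C (b-a)²/8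
  have hkey : C * (b - a) ^ 2 / 8 ≤ phi m - (phi a + phi b) / 2 := by
    simp only [ψ, hm] at hkey1
    nlinarith [hkey1]
  -- midpoint of affine function
  have hgmid : g m = (g a + g b) / 2 := by
    simp only [hgdef, hm]; ring
  set S := sSup ((fun x => |phi x - g x|) '' Set.Icc a b) with hS
  have hbdd : BddAbove ((fun x => |phi x - g x|) '' Set.Icc a b) := by
    apply IsCompact.bddAbove_image isCompact_Icc
    apply ContinuousOn.abs
    apply hcont.sub
    have : Continuous g := by
      have : g = fun x => α + γ * x := funext hgdef
      rw [this]; fun_prop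
    exact this.continuousOn
  have hle : ∀ x ∈ Set.Icc a b, |phi x - g x| ≤ S :=
    fun x hx => le_csSup hbdd ⟨x, hx, rfl⟩
  have hA := hle a ⟨le_rfl, hab.le⟩
  have hB := hle b ⟨hab.le, le_rfl⟩
  have hM := hle m ⟨ham.le, hmb.le⟩
  have h1 := le_abs_self (phi m - g m)
  have h2 := neg_abs_le (phi a - g a)
  have h3 := neg_abs_le (phi b - g b)
  rw [hgmid] at h1 hM
  linarith
end
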